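/- Output subsumes input: in every UAPC-derivable annotated sequent Γ ⊢^χ_Σ Δ, the output set Σ mentions at least every label occurring in the input set χ; that is, for every entry l_M ∈ χ there exists a mutation set N with l_N ∈ Σ. (Observation 3.) -/

import Mathlib

/-!
Core formalization for "A Usage-Aware Sequent Calculus for Differential Dynamic Logic".

We formalize:
* labeled dL syntax (terms, hybrid programs, formulas) where every atom carries a unique label,
* the standard dL semantics (states, term valuation, program transition relations with ODEs
  interpreted via `HasDerivAt`, formula satisfaction) and validity of sequents,
* mutations {id, W, R}, mutation choices (one chosen mutation per label), the mutation
  operator μ, label sets (maps from labels to sets of admissible mutations), merge ⊔,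
  set difference, and choices of mutation operators for a label set.
-/

/-- The three mutations considered in the paper. -/
inductive Mutation : Type
  | id | W | R
  deriving DecidableEq

/-- Labels identify atoms of a dL sequent. -/
abbrev Label := ℕ

/-- dL terms: variables, rational constants, sums and products (polynomials). -/
inductive Trm : Type
  | var (x : ℕ)
  | const (c : ℚ)
  | add (e d : Trm)
  | mul (e d : Trm)

/-- Comparison operators `=`, `≥`, `>`. -/
inductive Cmp : Type
  | eq | ge | gt
  deriving DecidableEq

mutual
/-- Labeled dL formulas: every atomic formula carries a label. -/
inductive Fml : Type
  | tt (l : Label)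
  | ff (l : Label)
  | cmp (l : Label) (c : Cmp) (e d : Trm)
  | pred (l : Label) (p : ℕ) (args : List Trm)
  | not (P : Fml)
  | and (P Q : Fml)
  | or (P Q : Fml)
  | imp (P Q : Fml)
  | iff (P Q : Fml)
  | all (x : ℕ) (P : Fml)
  | ex (x : ℕ) (P : Fml)
  | box (a : Prg) (P : Fml)
  | dia (a : Prg) (P : Fml)

/-- Labeled hybrid programs: every atomic program carries a label. -/
inductive Prg : Type
  | assign (l : Label) (x : ℕ) (e : Trm)
  | anyAssign (l : Label) (x : ℕ)
  | ode (l : Label) (x : ℕ) (e : Trm) (Q : Fml)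
  | test (Q : Fml)
  | seq (a b : Prg)
  | choice (a b : Prg)
  | star (a : Prg)
end

/-- States assign real values to variables. -/
abbrev State := ℕ → ℝ

/-- Interpretations of predicate symbols. -/
abbrev Interp := ℕ → List ℝ → Prop

/-- Valuation of terms. -/
def Trm.val (s : State) : Trm → ℝ
  | .var x => s x
  | .const c => (c : ℝ)
  | .add e d => e.val s + d.val s
  | .mul e d => e.val s * d.val s

mutual
/-- Standard dL satisfaction relation for formulas. -/
def Fml.sat (I : Interp) : Fml → State → Prop
  | .tt _, _ => True
  | .ff _, _ => False
  | .cmp _ .eq e d, s => e.val s = d.val s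
  | .cmp _ .ge e d, s => e.val s ≥ d.val s
  | .cmp _ .gt e d, s => e.val s > d.val s
  | .pred _ p args, s => I p (args.map (Trm.val s))
  | .not P, s => ¬ Fml.sat I P s
  | .and P Q, s => Fml.sat I P s ∧ Fml.sat I Q s
  | .or P Q, s => Fml.sat I P s ∨ Fml.sat I Q s
  | .imp P Q, s => Fml.sat I P s → Fml.sat I Q s
  | .iff P Q, s => Fml.sat I P s ↔ Fml.sat I Q s
  | .all x P, s => ∀ r : ℝ, Fml.sat I P (Function.update s x r)
  | .ex x P, s => ∃ r : ℝ, Fml.sat I P (Function.update s x r)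
  | .box a P, s => ∀ s', Prg.rel I a s s' → Fml.sat I P s'
  | .dia a P, s => ∃ s', Prg.rel I a s s' ∧ Fml.sat I P s'

/-- Standard dL transition relation for hybrid programs; the differential
equation `x' = e & Q` evolves `x` along a differentiable solution that
satisfies the evolution domain constraint `Q` throughout. -/
def Prg.rel (I : Interp) : Prg → State → State → Prop
  | .assign _ x e, s, s' => s' = Function.update s x (Trm.val s e)
  | .anyAssign _ x, s, s' => ∃ r : ℝ, s' = Function.update s x r
  | .ode _ x e Q, s, s' =>
      ∃ (T : ℝ) (f : ℝ → ℝ), 0 ≤ T ∧ f 0 = s x ∧ s' = Function.update s x (f T) ∧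
        ∀ t ∈ Set.Icc (0 : ℝ) T,
          HasDerivAt f (Trm.val (Function.update s x (f t)) e) t ∧
          Fml.sat I Q (Function.update s x (f t))
  | .test Q, s, s' => s' = s ∧ Fml.sat I Q s
  | .seq a b, s, s' => ∃ m, Prg.rel I a s m ∧ Prg.rel I b m s'
  | .choice a b, s, s' => Prg.rel I a s s' ∨ Prg.rel I b s s'
  | .star a, s, s' => Relation.ReflTransGen (fun u v => Prg.rel I a u v) s s'
end

/-- A dL sequent `Γ ⊢ Δ` is valid iff `⋀Γ → ⋁Δ` is valid in every state
under every interpretation. -/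
def SeqValid (Γ Δ : List Fml) : Prop :=
  ∀ (I : Interp) (s : State), (∀ P ∈ Γ, Fml.sat I P s) → ∃ Q ∈ Δ, Fml.sat I Q s

mutual
/-- Labels occurring in a formula. -/
def fmlLabels : Fml → List Label
  | .tt l => [l]
  | .ff l => [l]
  | .cmp l _ _ _ => [l]
  | .pred l _ _ => [l]
  | .not P => fmlLabels P
  | .and P Q => fmlLabels P ++ fmlLabels Q
  | .or P Q => fmlLabels P ++ fmlLabels Q
  | .imp P Q => fmlLabels P ++ fmlLabels Q
  | .iff P Q => fmlLabels P ++ fmlLabels Q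
  | .all _ P => fmlLabels P
  | .ex _ P => fmlLabels P
  | .box a P => prgLabels a ++ fmlLabels P
  | .dia a P => prgLabels a ++ fmlLabels P

/-- Labels occurring in a program. -/
def prgLabels : Prg → List Label
  | .assign l _ _ => [l]
  | .anyAssign l _ => [l]
  | .ode l _ _ Q => l :: fmlLabels Q
  | .test Q => fmlLabels Q
  | .seq a b => prgLabels a ++ prgLabels b
  | .choice a b => prgLabels a ++ prgLabels b
  | .star a => prgLabels a
end

/-- Labels of a list of formulas. -/
def ctxLabels (Γ : List Fml) : List Label :=
  Γ.foldr (fun P acc => fmlLabels P ++ acc) []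

/-- Labels of a sequent `Γ ⊢ Δ`. -/
def seqLabels (Γ Δ : List Fml) : List Label :=
  ctxLabels Γ ++ ctxLabels Δ

/-- A mutation choice assigns to (some) labels a single chosen mutation. -/
def MutChoice := Label → Option Mutation

mutual
/-- The mutation operator `μ` on formulas: it traverses the formula and replaces
every atom whose label has a chosen mutation by its mutated form.  `id` leaves the
atom unchanged; `R` replaces atomic formulas by `true` and atomic programs by the
effect-free test `?true`; `W` weakens the atom (canonically `e > d` becomes
`e ≥ d`; other atoms are left unchanged).  Atoms whose label is not mentioned are
unchanged. -/
def applyFml (μ : MutChoice) : Fml → Fml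
  | .tt l => .tt l
  | .ff l => .ff l
  | .cmp l c e d =>
      match μ l, c with
      | some .R, _ => .tt l
      | some .W, .gt => .cmp l .ge e d
      | _, _ => .cmp l c e d
  | .pred l p args =>
      match μ l with
      | some .R => .tt l
      | _ => .pred l p args
  | .not P => .not (applyFml μ P)
  | .and P Q => .and (applyFml μ P) (applyFml μ Q)
  | .or P Q => .or (applyFml μ P) (applyFml μ Q)
  | .imp P Q => .imp (applyFml μ P) (applyFml μ Q)
  | .iff P Q => .iff (applyFml μ P) (applyFml μ Q)
  | .all x P => .all x (applyFml μ P)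
  | .ex x P => .ex x (applyFml μ P)
  | .box a P => .box (applyPrg μ a) (applyFml μ P)
  | .dia a P => .dia (applyPrg μ a) (applyFml μ P)

/-- The mutation operator `μ` on programs. -/
def applyPrg (μ : MutChoice) : Prg → Prg
  | .assign l x e =>
      match μ l with
      | some .R => .test (.tt l)
      | _ => .assign l x e
  | .anyAssign l x =>
      match μ l with
      | some .R => .test (.tt l)
      | _ => .anyAssign l x
  | .ode l x e Q =>
      match μ l with
      | some .R => .test (applyFml μ Q)
      | _ => .ode l x e (applyFml μ Q)
  | .test Q => .test (applyFml μ Q)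
  | .seq a b => .seq (applyPrg μ a) (applyPrg μ b)
  | .choice a b => .choice (applyPrg μ a) (applyPrg μ b)
  | .star a => .star (applyPrg μ a)
end

/-- Validity of the sequent obtained by applying the mutation operator `μ`. -/
def MutSeqValid (μ : MutChoice) (Γ Δ : List Fml) : Prop :=
  SeqValid (Γ.map (applyFml μ)) (Δ.map (applyFml μ))

/-- A label set assigns to (some) labels a set of admissible mutations;
`none` means the label is not mentioned. -/
def LabelSet := Label → Option (Set Mutation)

/-- The merge `Σ ⊔ Ω` of two label sets: labels occurring in both track the
intersection of their mutation sets; labels occurring in exactly one are kept. -/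
def LabelSet.merge (S T : LabelSet) : LabelSet := fun l =>
  match S l, T l with
  | some M, some N => some (M ∩ N)
  | some M, none => some M
  | none, o => o

/-- Set difference `Σ ∖ l⃗`: removes every entry whose label lies in `ls`
regardless of its mutation set. -/
def LabelSet.removeAll (S : LabelSet) (ls : List Label) : LabelSet := fun l =>
  if l ∈ ls then none else S l

/-- Restriction of a label set to the labels in `ls`. -/
def LabelSet.restrict (S : LabelSet) (ls : List Label) : LabelSet := fun l =>
  if l ∈ ls then S l else none

/-- The label set assigning every mutation (`any`) to the given labels. -/
def anyLS (ls : List Label) : LabelSet := fun l =>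
  if l ∈ ls then some Set.univ else none

/-- The label set assigning only the identity mutation to a single label. -/
def idLS (l : Label) : LabelSet := fun k =>
  if k = l then some {Mutation.id} else none

/-- `μ` is a choice of the mutation operator for the label set `S`: it selects,
for every entry `l_M ∈ S`, one mutation `m ∈ M`, and mentions no other labels. -/
def IsChoice (μ : MutChoice) (S : LabelSet) : Prop :=
  ∀ l, (S l = none → μ l = none) ∧ (∀ M, S l = some M → ∃ m ∈ M, μ l = some m)
/-- The usage-aware proof calculus UAPC (a representative core of the calculus of
the paper): judgments are annotated sequents `Γ ⊢^χ_Σ Δ`, written `UAPC χ Γ Σ Δ`,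
where `χ` is the input label set and `Σ` the output label set.  Single-premise
rules pass `χ` up and `Σ` down; multi-premise rules merge (⊔) the outputs of
their premises; cut-like rules (`cut`, `loop`) label cut formulas with labels
that are either reused from the conclusion's context or fresh, and remove the
fresh labels from the conclusion's output set; weakening rules add the weakened
formula's labels with mutation set `{id, W, R}`; the leaf rule `id` outputs
`{(i⃗⋈j⃗)_any, k⃗_any, l⃗_any} ⊔ χ` (here the two occurrences of `P` are the same
labeled formula, so fusing is automatic), `⊤R` and `⊥L` output their fixed sets,
and `da` covers the leaves QE, ℝ, auto, outputting `DA(i⃗,j⃗) ⊔ χ` where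
`DA(i⃗,j⃗)` mentions every label of the leaf sequent and every choice of
`μ_{DA(i⃗,j⃗)}` applied to a valid leaf sequent yields a valid sequent. -/
inductive UAPC : LabelSet → List Fml → LabelSet → List Fml → Prop
  | id {χ : LabelSet} (P : Fml) (Γ Δ : List Fml) :
      UAPC χ (P :: Γ)
        ((anyLS (fmlLabels P ++ seqLabels Γ Δ)).merge χ) (P :: Δ)
  | topR {χ : LabelSet} (l : Label) (Γ Δ : List Fml) :
      UAPC χ Γ (((idLS l).merge (anyLS (seqLabels Γ Δ))).merge χ) (Fml.tt l :: Δ)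
  | botL {χ : LabelSet} (l : Label) (Γ Δ : List Fml) :
      UAPC χ (Fml.ff l :: Γ) (((idLS l).merge (anyLS (seqLabels Γ Δ))).merge χ) Δ
  | da {χ : LabelSet} (D : LabelSet) (Γ Δ : List Fml)
      (hval : SeqValid Γ Δ)
      (hcover : ∀ l ∈ seqLabels Γ Δ, ∃ M, D l = some M)
      (hDA : SeqValid Γ Δ → ∀ μ, IsChoice μ D → MutSeqValid μ Γ Δ) :
      UAPC χ Γ (D.merge χ) Δ
  | negR {χ S : LabelSet} {Γ Δ : List Fml} {P : Fml} :
      UAPC χ (P :: Γ) S Δ → UAPC χ Γ S (Fml.not P :: Δ)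
  | negL {χ S : LabelSet} {Γ Δ : List Fml} {P : Fml} :
      UAPC χ Γ S (P :: Δ) → UAPC χ (Fml.not P :: Γ) S Δ
  | andR {χ S O : LabelSet} {Γ : List Fml} {P Q : Fml} :
      UAPC χ Γ S [P] → UAPC χ Γ O [Q] → UAPC χ Γ (S.merge O) [Fml.and P Q]
  | orR {χ S : LabelSet} {Γ Δ : List Fml} {P Q : Fml} :
      UAPC χ Γ S (P :: Q :: Δ) → UAPC χ Γ S (Fml.or P Q :: Δ)
  | impR {χ S : LabelSet} {Γ Δ : List Fml} {P Q : Fml} :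
      UAPC χ (P :: Γ) S (Q :: Δ) → UAPC χ Γ S (Fml.imp P Q :: Δ)
  | andL {χ S : LabelSet} {Γ Δ : List Fml} {P Q : Fml} :
      UAPC χ (P :: Q :: Γ) S Δ → UAPC χ (Fml.and P Q :: Γ) S Δ
  | orL {χ S O : LabelSet} {Γ Δ : List Fml} {P Q : Fml} :
      UAPC χ (P :: Γ) S Δ → UAPC χ (Q :: Γ) O Δ →
      UAPC χ (Fml.or P Q :: Γ) (S.merge O) Δ
  | impL {χ S O : LabelSet} {Γ Δ : List Fml} {P Q : Fml} :
      UAPC χ Γ S (P :: Δ) → UAPC χ (Q :: Γ) O Δ →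
      UAPC χ (Fml.imp P Q :: Γ) (S.merge O) Δ
  | wkL {χ S : LabelSet} {Γ Δ : List Fml} (P : Fml) :
      UAPC χ Γ S Δ → UAPC χ (P :: Γ) (S.merge (anyLS (fmlLabels P))) Δ
  | wkR {χ S : LabelSet} {Γ Δ : List Fml} (P : Fml) :
      UAPC χ Γ S Δ → UAPC χ Γ (S.merge (anyLS (fmlLabels P))) (P :: Δ)
  | perm {χ S : LabelSet} {Γ Γ' Δ Δ' : List Fml} :
      Γ.Perm Γ' → Δ.Perm Δ' → UAPC χ Γ S Δ → UAPC χ Γ' S Δ'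
  | cut {χ S O : LabelSet} {Γ Δ : List Fml} (C : Fml) (ls : List Label)
      (hφ : ∀ l ∈ fmlLabels C, l ∈ seqLabels Γ Δ ∨ l ∈ ls)
      (hfresh : ∀ l ∈ ls, l ∉ seqLabels Γ Δ ∧ χ l = none) :
      UAPC χ (C :: Γ) S Δ → UAPC χ Γ O (C :: Δ) →
      UAPC χ Γ ((S.merge O).removeAll ls) Δ
  | loop {χ S O Th : LabelSet} {Γ Δ : List Fml} (J P : Fml) (a : Prg) (ls : List Label)
      (hφ : ∀ l ∈ fmlLabels J, l ∈ seqLabels Γ (Fml.box (Prg.star a) P :: Δ) ∨ l ∈ ls)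
      (hfresh : ∀ l ∈ ls, l ∉ seqLabels Γ (Fml.box (Prg.star a) P :: Δ) ∧ χ l = none) :
      UAPC χ Γ S (J :: Δ) → UAPC χ [J] O [P] → UAPC χ [J] Th [Fml.box a J] →
      UAPC χ Γ (((S.merge O).merge Th).removeAll ls) (Fml.box (Prg.star a) P :: Δ)

namespace LabelSet

def dom (S : LabelSet) : Set Label := {l | ∃ M, S l = some M}

theorem mem_dom {S : LabelSet} {l : Label} : l ∈ S.dom ↔ ∃ M, S l = some M := Iff.rfl

theorem dom_merge (S T : LabelSet) : (S.merge T).dom = S.dom ∪ T.dom := by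
  ext l
  simp only [Set.mem_union, mem_dom, merge]
  cases S l <;> cases T l <;> simp

theorem dom_removeAll (S : LabelSet) (ls : List Label) :
    (S.removeAll ls).dom = S.dom \ {l | l ∈ ls} := by
  ext l
  by_cases hl : l ∈ ls <;> simp [mem_dom, removeAll, hl]

end LabelSet

open LabelSet

theorem dom_subset_dom_removeAll_of_fresh {χ S : LabelSet} {ls : List Label}
    (hfresh : ∀ l ∈ ls, χ l = none) (hS : χ.dom ⊆ S.dom) :
    χ.dom ⊆ (S.removeAll ls).dom := by
  rw [dom_removeAll]
  rintro l ⟨M, hM⟩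
  exact ⟨hS ⟨M, hM⟩, fun hl => by simp [hfresh l hl] at hM⟩

theorem UAPC.input_dom_subset_output_dom {χ S : LabelSet} {Γ Δ : List Fml}
    (h : UAPC χ Γ S Δ) : χ.dom ⊆ S.dom := by
  induction h with
  | id | topR | botL | da =>
    rw [dom_merge]
    exact Set.subset_union_right
  | negR _ ih | negL _ ih | orR _ ih | impR _ ih | andL _ ih | perm _ _ _ ih => exact ih
  | andR _ _ ih | orL _ _ ih | impL _ _ ih | wkL _ _ ih | wkR _ _ ih =>
    rw [dom_merge]
    exact ih.trans Set.subset_union_left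
  | cut _ _ _ hfresh _ _ ih =>
    refine dom_subset_dom_removeAll_of_fresh (fun l hl => (hfresh l hl).2) ?_
    rw [dom_merge]
    exact ih.trans Set.subset_union_left
  | loop _ _ _ _ _ hfresh _ _ _ ih =>
    refine dom_subset_dom_removeAll_of_fresh (fun l hl => (hfresh l hl).2) ?_
    rw [dom_merge, dom_merge]
    exact ih.trans (Set.subset_union_left.trans Set.subset_union_left)

/-- **Observation 3 (Output subsumes input).** In every UAPC-derivable annotated
sequent `Γ ⊢^χ_Σ Δ`, the output set `Σ` mentions at least every label occurring
in the input set `χ`: for every entry `l_M ∈ χ` there is a mutation set `N` with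
`l_N ∈ Σ`. -/
theorem uapc_output_subsumes_input (χ Sg : LabelSet) (Γ Δ : List Fml)
    (h : UAPC χ Γ Sg Δ) :
    ∀ (l : Label) (M : Set Mutation), χ l = some M →
      ∃ N : Set Mutation, Sg l = some N :=
  fun _ M hM => h.input_dom_subset_output_dom ⟨M, hM⟩
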